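/- The Stieltjes transform of the Wigner semicircle distribution μ_sc(dx) = (1/(2π))√(4 - x²)·1_{[-2,2]} dx, namely s(z) = ∫ (x - z)⁻¹ μ_sc(dx), satisfies the functional equation s(z)² + z·s(z) + 1 = 0 for all z ∈ ℂ \ [-2, 2] (equivalently s(z) = -1/(z + s(z))). -/

import Mathlib

/-!
Write `z = p + q` with `p * q = 1` and `‖p‖ < 1`, which is possible exactly off `[-2, 2]`.
Substituting `x = 2 cos θ` and dividing `4 - x²` by `x - z` reduces `s z` to
`∫₀^π dθ / (2 cos θ - z)`, half of a full-period integral. With `u = e^{iθ}` one has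
`(u - p)(u - q) = u (2 cos θ - z)`, so the period integral is `∮ du / (i (u - p)(u - q))` over
the unit circle, and Cauchy's formula at the only inner pole `p` evaluates it to `2π / (p - q)`.
Altogether `s z = -p`, and `p² - z p + 1 = 0`.
-/

open MeasureTheory Real

theorem one_lt_norm_of_mul_eq_one {𝕜 : Type*} [NormedDivisionRing 𝕜] {p q : 𝕜}
    (h : p * q = 1) (hp : ‖p‖ < 1) : 1 < ‖q‖ := by
  have : ‖p‖ * ‖q‖ = 1 := by rw [← norm_mul, h, norm_one]
  nlinarith [norm_nonneg p, norm_nonneg q]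

theorem norm_lt_one_of_mul_eq_one {𝕜 : Type*} [NormedDivisionRing 𝕜] {p q : 𝕜}
    (h : p * q = 1) (hp : 1 < ‖p‖) : ‖q‖ < 1 := by
  have : ‖p‖ * ‖q‖ = 1 := by rw [← norm_mul, h, norm_one]
  nlinarith [norm_nonneg p, norm_nonneg q]

theorem add_mem_image_Icc_of_mul_eq_one_of_norm_eq_one {p q : ℂ} (h : p * q = 1)
    (hp : ‖p‖ = 1) :
    p + q ∈ (fun x : ℝ => (x : ℂ)) '' Set.Icc (-2 : ℝ) 2 := by
  have hq : q = starRingEnd ℂ p := by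
    rw [← Complex.inv_eq_conj hp, eq_inv_of_mul_eq_one_right h]
  have hre : |p.re| ≤ 1 := hp ▸ Complex.abs_re_le_norm p
  refine ⟨2 * p.re, ⟨by linarith [(abs_le.mp hre).1], by linarith [(abs_le.mp hre).2]⟩, ?_⟩
  rw [hq, Complex.add_conj]

theorem exists_mul_eq_one_add_eq_norm_lt_one {z : ℂ}
    (hz : z ∉ (fun x : ℝ => (x : ℂ)) '' Set.Icc (-2 : ℝ) 2) :
    ∃ p q : ℂ, p * q = 1 ∧ p + q = z ∧ ‖p‖ < 1 := by
  obtain ⟨w, hw⟩ : ∃ w : ℂ, w ^ 2 = z ^ 2 - 4 := IsAlgClosed.exists_pow_nat_eq _ two_pos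
  have hprod : (z + w) / 2 * ((z - w) / 2) = 1 := by linear_combination (-1 / 4 : ℂ) * hw
  have hsum : (z + w) / 2 + (z - w) / 2 = z := by ring
  rcases lt_trichotomy ‖(z + w) / 2‖ 1 with h | h | h
  · exact ⟨_, _, hprod, hsum, h⟩
  · exact absurd (hsum ▸ add_mem_image_Icc_of_mul_eq_one_of_norm_eq_one hprod h) hz
  · exact ⟨_, _, (mul_comm _ _).trans hprod, (add_comm _ _).trans hsum,
      norm_lt_one_of_mul_eq_one hprod h⟩

theorem exp_sub_mul_exp_sub_of_mul_eq_one {p q : ℂ} (h : p * q = 1) (θ : ℝ) :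
    (Complex.exp (θ * Complex.I) - p) * (Complex.exp (θ * Complex.I) - q) =
      Complex.exp (θ * Complex.I) * (((2 * cos θ : ℝ) : ℂ) - (p + q)) := by
  rw [Complex.ofReal_mul, Complex.ofReal_ofNat, Complex.ofReal_cos, Complex.two_cos, neg_mul,
    Complex.exp_neg]
  field_simp
  linear_combination h

theorem add_notMem_image_Icc_of_mul_eq_one {p q : ℂ} (h : p * q = 1) (hp : ‖p‖ < 1) :
    p + q ∉ (fun x : ℝ => (x : ℂ)) '' Set.Icc (-2 : ℝ) 2 := by
  rintro ⟨x, hx, hxpq⟩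
  have hroot := exp_sub_mul_exp_sub_of_mul_eq_one h (arccos (x / 2))
  rw [cos_arccos (by linarith [hx.1]) (by linarith [hx.2]), mul_div_cancel₀ _ two_ne_zero,
    show (x : ℂ) = p + q from hxpq,
    sub_self, mul_zero, mul_eq_zero, sub_eq_zero, sub_eq_zero] at hroot
  rcases hroot with hp' | hq'
  · exact hp.ne (by rw [← hp', Complex.norm_exp_ofReal_mul_I])
  · exact (one_lt_norm_of_mul_eq_one h hp).ne'
      (by rw [← hq', Complex.norm_exp_ofReal_mul_I])

theorem two_mul_cos_mem_Icc (θ : ℝ) : 2 * cos θ ∈ Set.Icc (-2 : ℝ) 2 :=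
  ⟨by linarith [neg_one_le_cos θ], by linarith [cos_le_one θ]⟩

theorem continuous_inv_two_cos_sub {z : ℂ}
    (hz : z ∉ (fun x : ℝ => (x : ℂ)) '' Set.Icc (-2 : ℝ) 2) :
    Continuous fun θ : ℝ => (((2 * cos θ : ℝ) : ℂ) - z)⁻¹ :=
  (by fun_prop : Continuous fun θ : ℝ => ((2 * cos θ : ℝ) : ℂ) - z).inv₀
    fun θ h => hz ⟨_, two_mul_cos_mem_Icc θ, sub_eq_zero.mp h⟩

theorem circleIntegral_inv_sub_mul_inv_sub {c p q : ℂ} {R : ℝ} (hp : p ∈ Metric.ball c R)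
    (hq : q ∉ Metric.closedBall c R) :
    (∮ u in C(c, R), (u - p)⁻¹ * (u - q)⁻¹) = 2 * π * Complex.I * (p - q)⁻¹ := by
  have hdiff : DiffContOnCl ℂ (fun u => (u - q)⁻¹) (Metric.ball c R) := by
    refine DifferentiableOn.diffContOnCl fun u hu => ?_
    have hu' : u ≠ q := fun h => hq (h ▸ Metric.closure_ball_subset_closedBall hu)
    exact ((differentiableAt_id.sub_const q).inv (sub_ne_zero.mpr hu')).differentiableWithinAt
  simpa only [smul_eq_mul] using hdiff.circleIntegral_sub_inv_smul hp

theorem integral_zero_two_pi_inv_two_cos_sub_add {p q : ℂ} (h : p * q = 1) (hp : ‖p‖ < 1) :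
    ∫ θ in (0)..(2 * π), (((2 * cos θ : ℝ) : ℂ) - (p + q))⁻¹ =
      2 * π * (p - q)⁻¹ := by
  have hcircle := circleIntegral_inv_sub_mul_inv_sub (c := 0) (R := 1) (by simpa using hp)
    (by simpa using one_lt_norm_of_mul_eq_one h hp)
  have hintegrand : ∀ θ : ℝ,
      deriv (circleMap 0 1) θ • ((circleMap 0 1 θ - p)⁻¹ * (circleMap 0 1 θ - q)⁻¹) =
        Complex.I * (((2 * cos θ : ℝ) : ℂ) - (p + q))⁻¹ := by
    intro θ
    rw [deriv_circleMap, circleMap_zero, Complex.ofReal_one, one_mul, ← mul_inv,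
      exp_sub_mul_exp_sub_of_mul_eq_one h, mul_inv, smul_eq_mul]
    field_simp
  rw [circleIntegral] at hcircle
  simp_rw [hintegrand, intervalIntegral.integral_const_mul] at hcircle
  exact mul_left_cancel₀ Complex.I_ne_zero (hcircle.trans (by ring))

theorem integral_comp_cos_zero_two_pi {E : Type*} [NormedAddCommGroup E] [NormedSpace ℝ E]
    {f : ℝ → E} (hf : Continuous fun θ => f (cos θ)) :
    ∫ θ in (0)..(2 * π), f (cos θ) = (2 : ℝ) • ∫ θ in (0)..π, f (cos θ) := by
  have hreflect : ∫ θ in π..(2 * π), f (cos θ) = ∫ θ in (0)..π, f (cos θ) := by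
    have := intervalIntegral.integral_comp_sub_left (fun θ => f (cos θ)) (a := 0) (b := π)
      (2 * π)
    simp only [cos_two_pi_sub, sub_zero] at this
    rw [show 2 * π - π = π by ring] at this
    exact this.symm
  rw [← intervalIntegral.integral_add_adjacent_intervals (b := π) (hf.intervalIntegrable _ _)
    (hf.intervalIntegrable _ _), hreflect, two_smul]

theorem integral_zero_pi_inv_two_cos_sub_add {p q : ℂ} (h : p * q = 1) (hp : ‖p‖ < 1) :
    ∫ θ in (0)..π, (((2 * cos θ : ℝ) : ℂ) - (p + q))⁻¹ = π * (p - q)⁻¹ := by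
  have hhalf := integral_comp_cos_zero_two_pi (f := fun x => (((2 * x : ℝ) : ℂ) - (p + q))⁻¹)
    (continuous_inv_two_cos_sub (add_notMem_image_Icc_of_mul_eq_one h hp))
  rw [integral_zero_two_pi_inv_two_cos_sub_add h hp, Complex.real_smul,
    Complex.ofReal_ofNat] at hhalf
  linear_combination -hhalf / 2

theorem integral_sq_two_sin_smul_inv_two_cos_sub {z : ℂ}
    (hz : z ∉ (fun x : ℝ => (x : ℂ)) '' Set.Icc (-2 : ℝ) 2) :
    ∫ θ in (0)..π, (2 * sin θ) ^ 2 • (((2 * cos θ : ℝ) : ℂ) - z)⁻¹ =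
      -(π * z) - (z ^ 2 - 4) * ∫ θ in (0)..π, (((2 * cos θ : ℝ) : ℂ) - z)⁻¹ := by
  have hcont := continuous_inv_two_cos_sub hz
  have hdiv : ∀ θ : ℝ, (2 * sin θ) ^ 2 • (((2 * cos θ : ℝ) : ℂ) - z)⁻¹ =
      -((2 * cos θ : ℝ) : ℂ) - z - (z ^ 2 - 4) * (((2 * cos θ : ℝ) : ℂ) - z)⁻¹ := by
    intro θ
    have hne : ((2 * cos θ : ℝ) : ℂ) - z ≠ 0 := fun h =>
      hz ⟨_, two_mul_cos_mem_Icc θ, sub_eq_zero.mp h⟩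
    rw [Complex.real_smul]
    field_simp
    push_cast
    linear_combination 4 * Complex.sin_sq_add_cos_sq (θ : ℂ)
  have hlin : ∫ θ in (0)..π, (-((2 * cos θ : ℝ) : ℂ) - z) = -(π * z) := by
    rw [intervalIntegral.integral_sub (Continuous.intervalIntegrable (by fun_prop) _ _)
      intervalIntegrable_const, intervalIntegral.integral_neg,
      intervalIntegral.integral_ofReal, intervalIntegral.integral_const_mul, integral_cos]
    simp
  simp_rw [hdiv]
  rw [intervalIntegral.integral_sub (Continuous.intervalIntegrable (by fun_prop) _ _)
    ((hcont.intervalIntegrable 0 π).const_mul _),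
    intervalIntegral.integral_const_mul, hlin]

theorem integral_eq_integral_mul_sin_smul_comp_mul_cos {E : Type*} [NormedAddCommGroup E]
    [NormedSpace ℝ E] {r : ℝ} (hr : 0 ≤ r) {g : ℝ → E}
    (hg : ContinuousOn g (Set.Icc (-r) r)) :
    ∫ x in (-r)..r, g x = ∫ θ in (0)..π, (r * sin θ) • g (r * cos θ) := by
  have hmaps : (fun θ => r * cos θ) '' Set.uIcc π 0 ⊆ Set.Icc (-r) r := by
    rintro _ ⟨θ, -, rfl⟩
    exact ⟨by nlinarith [neg_one_le_cos θ], by nlinarith [cos_le_one θ]⟩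
  have hsubst := intervalIntegral.integral_deriv_smul_comp' (a := π) (b := 0)
    (f := fun θ => r * cos θ) (f' := fun θ => -(r * sin θ)) (g := g)
    (fun θ _ => by simpa using (hasDerivAt_cos θ).const_mul r) (by fun_prop) (hg.mono hmaps)
  simp only [cos_pi, cos_zero, mul_neg, mul_one, neg_smul, intervalIntegral.integral_neg,
    Function.comp_def] at hsubst
  rw [← hsubst, intervalIntegral.integral_symm, neg_neg]

theorem integral_withDensity_indicator_ofReal {X E : Type*} [MeasurableSpace X]
    [NormedAddCommGroup E] [NormedSpace ℝ E] {μ : Measure X} {s : Set X} (hs : MeasurableSet s)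
    {ρ : X → ℝ} (hρm : Measurable ρ) (hρ : ∀ x ∈ s, 0 ≤ ρ x) (g : X → E) :
    ∫ x, g x ∂μ.withDensity (fun x => s.indicator (fun x => ENNReal.ofReal (ρ x)) x) =
      ∫ x in s, ρ x • g x ∂μ := by
  rw [withDensity_indicator hs, integral_withDensity_eq_integral_toReal_smul hρm.ennreal_ofReal
    (.of_forall fun _ => ENNReal.ofReal_lt_top)]
  exact setIntegral_congr_fun hs fun x hx => by rw [ENNReal.toReal_ofReal (hρ x hx)]

noncomputable def semicircleMeasure : Measure ℝ :=
  volume.withDensity fun x =>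
    (Set.Icc (-2 : ℝ) 2).indicator (fun x => ENNReal.ofReal (√(4 - x ^ 2) / (2 * π))) x

theorem integral_semicircleMeasure {E : Type*} [NormedAddCommGroup E] [NormedSpace ℝ E]
    {g : ℝ → E} (hg : ContinuousOn g (Set.Icc (-2) 2)) :
    ∫ x, g x ∂semicircleMeasure =
      (2 * π)⁻¹ • ∫ θ in (0)..π, (2 * sin θ) ^ 2 • g (2 * cos θ) := by
  have hsqrt : ∀ θ ∈ Set.uIcc 0 π, √(4 - (2 * cos θ) ^ 2) = 2 * sin θ := fun θ hθ => by
    rw [Set.uIcc_of_le pi_pos.le] at hθ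
    rw [show 4 - (2 * cos θ) ^ 2 = (2 * sin θ) ^ 2 by nlinarith [sin_sq_add_cos_sq θ],
      sqrt_sq (by nlinarith [sin_nonneg_of_nonneg_of_le_pi hθ.1 hθ.2])]
  rw [semicircleMeasure, integral_withDensity_indicator_ofReal measurableSet_Icc (by fun_prop)
    (fun x _ => by positivity), integral_Icc_eq_integral_Ioc,
    ← intervalIntegral.integral_of_le (by norm_num)]
  simp_rw [div_eq_inv_mul, mul_smul]
  rw [intervalIntegral.integral_smul, integral_eq_integral_mul_sin_smul_comp_mul_cos
    (g := fun x => √(4 - x ^ 2) • g x) zero_le_two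
    ((by fun_prop : Continuous fun x : ℝ => √(4 - x ^ 2)).continuousOn.smul hg)]
  congr 1
  refine intervalIntegral.integral_congr fun θ hθ => ?_
  rw [hsqrt θ hθ, smul_smul, sq]

theorem integral_inv_sub_add_semicircleMeasure {p q : ℂ} (h : p * q = 1) (hp : ‖p‖ < 1) :
    ∫ x, ((x : ℂ) - (p + q))⁻¹ ∂semicircleMeasure = -p := by
  have hpq := add_notMem_image_Icc_of_mul_eq_one h hp
  have hcont : ContinuousOn (fun x : ℝ => ((x : ℂ) - (p + q))⁻¹) (Set.Icc (-2) 2) :=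
    (by fun_prop : Continuous fun x : ℝ => (x : ℂ) - (p + q)).continuousOn.inv₀
      fun x hx hx' => hpq ⟨x, hx, sub_eq_zero.mp hx'⟩
  have hsub : p - q ≠ 0 := sub_ne_zero.mpr fun hpq' =>
    (one_lt_norm_of_mul_eq_one h hp).not_gt (hpq' ▸ hp)
  have hπ : (π : ℂ) ≠ 0 := Complex.ofReal_ne_zero.mpr pi_ne_zero
  rw [integral_semicircleMeasure hcont, integral_sq_two_sin_smul_inv_two_cos_sub hpq,
    integral_zero_pi_inv_two_cos_sub_add h hp, Complex.real_smul]
  push_cast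
  field_simp
  linear_combination -4 * h

/-- The Stieltjes transform `s(z) = ∫ (x - z)⁻¹ dμ_sc(x)` of the Wigner
semicircle distribution `μ_sc(dx) = (2π)⁻¹ √(4-x²) 1_{[-2,2]} dx` satisfies
`s(z)² + z s(z) + 1 = 0` for all `z ∈ ℂ \ [-2,2]`. -/
theorem semicircle_stieltjes_functional_equation
    (μ : Measure ℝ)
    (hμ : μ = volume.withDensity (fun x =>
      Set.indicator (Set.Icc (-2 : ℝ) 2)
        (fun x => ENNReal.ofReal (Real.sqrt (4 - x ^ 2) / (2 * π))) x))
    (s : ℂ → ℂ)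
    (hs : ∀ z : ℂ, s z = ∫ x : ℝ, ((x : ℂ) - z)⁻¹ ∂μ) :
    ∀ z : ℂ, z ∉ (fun x : ℝ => (x : ℂ)) '' Set.Icc (-2 : ℝ) 2 →
      s z ^ 2 + z * s z + 1 = 0 := by
  intro z hz
  obtain ⟨p, q, h, rfl, hp⟩ := exists_mul_eq_one_add_eq_norm_lt_one hz
  have hsp : s (p + q) = -p := by
    rw [hs, hμ]
    exact integral_inv_sub_add_semicircleMeasure h hp
  rw [hsp]
  linear_combination -h
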